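/- arXiv:1209.3632 — 4 statements merged into one kernel-verified Lean document; each statement's English description precedes it below -/
import Mathlib

section
/- If H is an n×n real infinitesimal stochastic matrix and t ≥ 0, then exp(tH) is a stochastic matrix: all its entries are nonnegative and each of its columns sums to 1. -/
/-!
Since `1ᵀ H = 0`, the row vector `1ᵀ` annihilates every term `(tH)ᵏ/k!` with `k ≥ 1` of the
exponential series, so `1ᵀ exp(tH) = 1ᵀ`. For positivity, `H + cI` has nonnegative entries once
`c` dominates the diagonal, and `exp(tH) = e^{-ct} exp(t(H + cI))` is a positive multiple of a
series of nonnegative matrices.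
-/

open NormedSpace
open scoped Matrix Matrix.Norms.Operator

namespace Matrix

variable {m : Type*} [Fintype m] [DecidableEq m]

theorem vecMul_exp_of_vecMul_eq_zero {𝔸 : Type*} [NormedRing 𝔸] [NormedAlgebra ℚ 𝔸]
    [CompleteSpace 𝔸] {v : m → 𝔸} {A : Matrix m m 𝔸} (hA : v ᵥ* A = 0) :
    v ᵥ* exp A = v := by
  -- Completeness for the operator-norm uniformity, which agrees with the product one only up to
  -- unfolding.
  have : @CompleteSpace (Matrix m m 𝔸) PseudoMetricSpace.toUniformSpace :=
    Matrix.instCompleteSpace m m 𝔸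
  have hsemiconj : SemiconjBy (replicateRow m v) A 0 := by
    rw [SemiconjBy, ← replicateRow_vecMul, hA, zero_mul, replicateRow_zero]
  have hrow := hsemiconj.exp_right
  rw [SemiconjBy, exp_zero, one_mul, ← replicateRow_vecMul] at hrow
  funext j
  exact congrFun (congrFun hrow j) j

theorem exp_apply_nonneg_of_nonneg {A : Matrix m m ℝ} (hA : ∀ i j, 0 ≤ A i j) (i j : m) :
    0 ≤ exp A i j := by
  have hseries := Pi.hasSum.1 (Pi.hasSum.1 (exp_series_hasSum_exp' (𝕂 := ℝ) A) i) j
  refine hseries.nonneg fun k => ?_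
  exact mul_nonneg (by positivity) (pow_apply_nonneg hA k i j)

theorem exp_add_smul_one (A : Matrix m m ℝ) (r : ℝ) :
    exp (A + r • (1 : Matrix m m ℝ)) = Real.exp r • exp A := by
  have hexp : exp (algebraMap ℝ (Matrix m m ℝ) r) = algebraMap ℝ (Matrix m m ℝ) (Real.exp r) := by
    rw [Real.exp_eq_exp_ℝ]
    exact (algebraMap_exp_comm r).symm
  rw [← Algebra.algebraMap_eq_smul_one, exp_add_of_commute _ _ (Algebra.commutes r A).symm, hexp,
    ← Algebra.commutes, ← Algebra.smul_def]

theorem exists_add_smul_one_nonneg {A : Matrix m m ℝ} (hA : ∀ i j, i ≠ j → 0 ≤ A i j) :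
    ∃ c : ℝ, ∀ i j, 0 ≤ (A + c • (1 : Matrix m m ℝ)) i j := by
  refine ⟨∑ k, |A k k|, fun i j => ?_⟩
  rcases eq_or_ne i j with rfl | hij
  · have hdiag : |A i i| ≤ ∑ k, |A k k| :=
      Finset.single_le_sum (f := fun k => |A k k|) (fun _ _ => abs_nonneg _) (Finset.mem_univ i)
    simp only [add_apply, smul_apply, one_apply_eq, smul_eq_mul, mul_one]
    linarith [neg_abs_le (A i i)]
  · simpa [one_apply_ne hij] using hA i j hij

theorem exp_apply_nonneg_of_offDiag_nonneg {A : Matrix m m ℝ}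
    (hA : ∀ i j, i ≠ j → 0 ≤ A i j) (i j : m) : 0 ≤ exp A i j := by
  obtain ⟨c, hc⟩ := exists_add_smul_one_nonneg hA
  have hshift : exp A = Real.exp (-c) • exp (A + c • (1 : Matrix m m ℝ)) := by
    rw [← exp_add_smul_one, add_assoc, ← add_smul, add_neg_cancel, zero_smul, add_zero]
  rw [hshift, smul_apply, smul_eq_mul]
  exact mul_nonneg (Real.exp_nonneg _) (exp_apply_nonneg_of_nonneg hc i j)

theorem exp_mem_colStochastic {A : Matrix m m ℝ} (hoff : ∀ i j, i ≠ j → 0 ≤ A i j)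
    (hsum : 1 ᵥ* A = 0) : exp A ∈ colStochastic ℝ m :=
  ⟨exp_apply_nonneg_of_offDiag_nonneg hoff, vecMul_exp_of_vecMul_eq_zero hsum⟩

end Matrix

/-- If `H` is infinitesimal stochastic and `t ≥ 0`, then `exp (t • H)` is a
stochastic matrix: nonnegative entries and each column sums to 1. -/
theorem exp_infinitesimalStochastic_isStochastic {n : ℕ} (H : Matrix (Fin n) (Fin n) ℝ)
    (hsum : ∀ j, ∑ i, H i j = 0)
    (hoff : ∀ i j, i ≠ j → 0 ≤ H i j)
    (t : ℝ) (ht : 0 ≤ t) :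
    (∀ i j, 0 ≤ NormedSpace.exp (t • H) i j) ∧
      (∀ j, ∑ i, NormedSpace.exp (t • H) i j = 1) := by
  have hoff_t : ∀ i j, i ≠ j → 0 ≤ (t • H) i j := fun i j hij => mul_nonneg ht (hoff i j hij)
  have hsum_t : 1 ᵥ* (t • H) = 0 := by
    funext j
    simp [Matrix.vecMul, dotProduct, ← Finset.mul_sum, hsum j]
  exact Matrix.mem_colStochastic_iff_sum.1 (Matrix.exp_mem_colStochastic hoff_t hsum_t)
end

section
/- (Stochastic Noether theorem, forward direction) Let H be an n×n infinitesimal stochastic matrix and O a diagonal real matrix (an observable). If O commutes with H, then for any solution ψ(t) of the master equation dψ/dt = Hψ, the expected value ∑_i (O^k ψ(t))_i of every power O^k is constant in time. -/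
/-! If `M` commutes with `H`, then `d/dt ∑ᵢ (M ψ)ᵢ = ∑ᵢ (H M ψ)ᵢ`, which vanishes because the
columns of `H` sum to zero; powers of an observable commuting with `H` commute with `H` too. -/

open Matrix

theorem Matrix.sum_mulVec_eq_zero_of_sum_col_eq_zero {ι R : Type*} [Fintype ι]
    [NonUnitalNonAssocSemiring R] {H : Matrix ι ι R} (hsum : ∀ j, ∑ i, H i j = 0) (v : ι → R) :
    ∑ i, (H *ᵥ v) i = 0 := by
  simp only [mulVec, dotProduct]
  rw [Finset.sum_comm]
  simp only [← Finset.sum_mul, hsum, zero_mul, Finset.sum_const_zero]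

theorem HasDerivAt.sum_mulVec {ι 𝕜 : Type*} [Fintype ι] [NontriviallyNormedField 𝕜]
    (M : Matrix ι ι 𝕜) {ψ : 𝕜 → ι → 𝕜} {ψ' : ι → 𝕜} {t : 𝕜} (hψ : HasDerivAt ψ ψ' t) :
    HasDerivAt (fun r ↦ ∑ i, (M *ᵥ ψ r) i) (∑ i, (M *ᵥ ψ') i) t := by
  simp only [mulVec, dotProduct]
  exact .fun_sum fun i _ ↦ .fun_sum fun j _ ↦ (hasDerivAt_pi.mp hψ j).const_mul (M i j)

theorem sum_mulVec_eq_of_commute {ι : Type*} [Fintype ι] {H M : Matrix ι ι ℝ}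
    (hsum : ∀ j, ∑ i, H i j = 0) (hcomm : Commute M H) {ψ : ℝ → ι → ℝ}
    (hψ : ∀ t, HasDerivAt ψ (H *ᵥ ψ t) t) (s t : ℝ) :
    ∑ i, (M *ᵥ ψ s) i = ∑ i, (M *ᵥ ψ t) i := by
  have hderiv : ∀ u, HasDerivAt (fun r ↦ ∑ i, (M *ᵥ ψ r) i) 0 u := fun u ↦ by
    have hMH : ∑ i, (M *ᵥ H *ᵥ ψ u) i = 0 := by
      rw [mulVec_mulVec, hcomm.eq, ← mulVec_mulVec, sum_mulVec_eq_zero_of_sum_col_eq_zero hsum]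
    simpa only [hMH] using (hψ u).sum_mulVec M
  exact is_const_of_deriv_eq_zero (fun u ↦ (hderiv u).differentiableAt) (fun u ↦ (hderiv u).deriv)
    s t

theorem stochastic_noether_forward_general {n : ℕ} (H : Matrix (Fin n) (Fin n) ℝ)
    (hsum : ∀ j, ∑ i, H i j = 0)
    (o : Fin n → ℝ)
    (hcomm : Matrix.diagonal o * H = H * Matrix.diagonal o)
    (ψ : ℝ → (Fin n → ℝ))
    (hψ : ∀ t, HasDerivAt ψ (H.mulVec (ψ t)) t) :
    ∀ (k : ℕ) (s t : ℝ),
      ∑ i, ((Matrix.diagonal o ^ k).mulVec (ψ s)) i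
        = ∑ i, ((Matrix.diagonal o ^ k).mulVec (ψ t)) i :=
  fun k ↦ sum_mulVec_eq_of_commute hsum (Commute.pow_left hcomm k) hψ

/-- Stochastic Noether theorem, forward direction: if an observable (diagonal
matrix) `O` commutes with an infinitesimal stochastic `H`, then the expected
value of every power `O^k` is constant along solutions of the master equation. -/
theorem stochastic_noether_forward {n : ℕ} (H : Matrix (Fin n) (Fin n) ℝ)
    (hsum : ∀ j, ∑ i, H i j = 0)
    (hoff : ∀ i j, i ≠ j → 0 ≤ H i j)
    (o : Fin n → ℝ)
    (hcomm : Matrix.diagonal o * H = H * Matrix.diagonal o)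
    (ψ : ℝ → (Fin n → ℝ))
    (hψ : ∀ t, HasDerivAt ψ (H.mulVec (ψ t)) t) :
    ∀ (k : ℕ) (s t : ℝ),
      ∑ i, ((Matrix.diagonal o ^ k).mulVec (ψ s)) i
        = ∑ i, ((Matrix.diagonal o ^ k).mulVec (ψ t)) i :=
  stochastic_noether_forward_general H hsum o hcomm ψ hψ
end

section
/- (Stochastic Noether theorem, converse direction) Let H be an n×n infinitesimal stochastic matrix and O a diagonal real matrix. If for all j both ∑_i O_i H_{ij} = 0 and ∑_i O_i² H_{ij} = 0, then O commutes with H, i.e., OH = HO. Equivalently, (O_i − O_j) H_{ij} = 0 for all i, j. -/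
/-!
Expanding the square, `∑ᵢ (oᵢ - oⱼ)² Hᵢⱼ = ∑ᵢ oᵢ² Hᵢⱼ - 2 oⱼ ∑ᵢ oᵢ Hᵢⱼ + oⱼ² ∑ᵢ Hᵢⱼ`, which vanishes
by the hypotheses. Every summand is nonnegative: off the diagonal because `Hᵢⱼ ≥ 0`, on it because
`oⱼ - oⱼ = 0`. Hence each summand vanishes, so `(oᵢ - oⱼ) Hᵢⱼ = 0`, which is the entrywise form
of `diagonal o * H = H * diagonal o`.
-/

open Finset

section

variable {ι R : Type*} [Fintype ι]

theorem sum_sub_sq_mul [CommRing R] (o h : ι → R) (c : R) :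
    ∑ i, (o i - c) ^ 2 * h i =
      ∑ i, o i ^ 2 * h i - 2 * c * ∑ i, o i * h i + c ^ 2 * ∑ i, h i := by
  simp only [mul_sum, ← sum_sub_distrib, ← sum_add_distrib]
  exact sum_congr rfl fun i _ => by ring

theorem Matrix.diagonal_mul_eq_mul_diagonal_iff [DecidableEq ι] [CommRing R]
    (o : ι → R) (H : Matrix ι ι R) :
    Matrix.diagonal o * H = H * Matrix.diagonal o ↔ ∀ i j, (o i - o j) * H i j = 0 := by
  simp only [← Matrix.ext_iff, Matrix.diagonal_mul, Matrix.mul_diagonal, sub_mul, sub_eq_zero,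
    mul_comm (H _ _)]

theorem sub_mul_eq_zero_of_sum_sub_sq_mul_eq_zero (H : Matrix ι ι ℝ)
    (hoff : ∀ i j, i ≠ j → 0 ≤ H i j) (o : ι → ℝ) (j : ι)
    (hzero : ∑ i, (o i - o j) ^ 2 * H i j = 0) (i : ι) :
    (o i - o j) * H i j = 0 := by
  have hnonneg : ∀ k ∈ univ, 0 ≤ (o k - o j) ^ 2 * H k j := by
    intro k _
    rcases eq_or_ne k j with rfl | hkj
    · simp
    · exact mul_nonneg (sq_nonneg _) (hoff k j hkj)
  have hsq : (o i - o j) ^ 2 * H i j = 0 := (sum_eq_zero_iff_of_nonneg hnonneg).mp hzero i (mem_univ i)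
  rcases mul_eq_zero.mp hsq with h | h
  · rw [pow_eq_zero_iff two_ne_zero |>.mp h, zero_mul]
  · rw [h, mul_zero]

end

/-- Stochastic Noether theorem, converse direction: if the expected values of
`O` and `O²` are infinitesimally conserved, then `O` commutes with `H`. -/
theorem stochastic_noether_converse {n : ℕ} (H : Matrix (Fin n) (Fin n) ℝ)
    (hsum : ∀ j, ∑ i, H i j = 0)
    (hoff : ∀ i j, i ≠ j → 0 ≤ H i j)
    (o : Fin n → ℝ)
    (h1 : ∀ j, ∑ i, o i * H i j = 0)
    (h2 : ∀ j, ∑ i, (o i) ^ 2 * H i j = 0) :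
    Matrix.diagonal o * H = H * Matrix.diagonal o ∧
      ∀ i j, (o i - o j) * H i j = 0 := by
  have hcomm : ∀ i j, (o i - o j) * H i j = 0 := by
    intro i j
    refine sub_mul_eq_zero_of_sum_sub_sq_mul_eq_zero H hoff o j ?_ i
    rw [sum_sub_sq_mul o (fun i => H i j), h1, h2, hsum]
    ring
  exact ⟨(Matrix.diagonal_mul_eq_mul_diagonal_iff o H).mpr hcomm, hcomm⟩
end

section
/- (Complex balance implies equilibrium of the rate equation) Let T be a finite set of transitions, each τ ∈ T having a rate constant r(τ) > 0, input vector m(τ) ∈ ℕᵏ and output vector n(τ) ∈ ℕᵏ. Suppose c ∈ [0,∞)ᵏ is complex balanced: for every κ ∈ ℕᵏ, ∑_{τ : m(τ)=κ} r(τ) c^{m(τ)} = ∑_{τ : n(τ)=κ} r(τ) c^{m(τ)}. Then c is an equilibrium of the rate equation: ∑_{τ∈T} r(τ)(n(τ) − m(τ)) c^{m(τ)} = 0. -/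
/-!
Grouping the transitions by their input complex and by their output complex writes both
∑ τ, n(τ) r(τ) c^{m(τ)} and ∑ τ, m(τ) r(τ) c^{m(τ)} as ∑ κ, κ · (flux through complex κ);
complex balance says these fluxes agree complex by complex, so the two sums are equal.
-/

open Finset

namespace Finset

variable {ι κ R : Type*} [DecidableEq κ] [NonUnitalNonAssocSemiring R]

theorem sum_comp_mul_eq_sum_mul_sum_fiberwise {s : Finset ι} {t : Finset κ} {f : ι → κ}
    (h : ∀ i ∈ s, f i ∈ t) (g : κ → R) (p : ι → R) :
    ∑ i ∈ s, g (f i) * p i = ∑ j ∈ t, g j * ∑ i ∈ s with f i = j, p i := by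
  rw [← sum_fiberwise_of_maps_to h]
  refine sum_congr rfl fun j _ => ?_
  rw [mul_sum]
  exact sum_congr rfl fun i hi => by rw [(mem_filter.1 hi).2]

theorem sum_comp_mul_eq_of_sum_fiberwise_eq [Fintype ι] {f f' : ι → κ} {p : ι → R}
    (h : ∀ j, ∑ i with f i = j, p i = ∑ i with f' i = j, p i) (g : κ → R) :
    ∑ i, g (f i) * p i = ∑ i, g (f' i) * p i := by
  have hf : ∀ i ∈ univ, f i ∈ univ.image f ∪ univ.image f' := fun i _ =>
    mem_union_left _ (mem_image_of_mem f (mem_univ i))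
  have hf' : ∀ i ∈ univ, f' i ∈ univ.image f ∪ univ.image f' := fun i _ =>
    mem_union_right _ (mem_image_of_mem f' (mem_univ i))
  simp only [sum_comp_mul_eq_sum_mul_sum_fiberwise hf, sum_comp_mul_eq_sum_mul_sum_fiberwise hf', h]

end Finset

theorem complexBalanced_equilibrium_general {k : ℕ} {T : Type*} [Fintype T]
    (r : T → ℝ)
    (m n : T → (Fin k → ℕ))
    (c : Fin k → ℝ)
    (hbal : ∀ κ : Fin k → ℕ,
      ∑ τ ∈ univ.filter (fun τ => m τ = κ), r τ * ∏ i, c i ^ (m τ i)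
        = ∑ τ ∈ univ.filter (fun τ => n τ = κ), r τ * ∏ i, c i ^ (m τ i)) :
    ∀ i : Fin k,
      ∑ τ, r τ * ((n τ i : ℝ) - (m τ i : ℝ)) * ∏ j, c j ^ (m τ j) = 0 := by
  intro i
  have hflux := sum_comp_mul_eq_of_sum_fiberwise_eq hbal (fun κ => (κ i : ℝ))
  calc ∑ τ, r τ * ((n τ i : ℝ) - (m τ i : ℝ)) * ∏ j, c j ^ (m τ j)
      = ∑ τ, (n τ i : ℝ) * (r τ * ∏ j, c j ^ (m τ j))
          - ∑ τ, (m τ i : ℝ) * (r τ * ∏ j, c j ^ (m τ j)) := by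
        rw [← sum_sub_distrib]
        exact sum_congr rfl fun τ _ => by ring
    _ = 0 := by rw [hflux, sub_self]

/-- Complex balance implies equilibrium of the rate equation. -/
theorem complexBalanced_equilibrium {k : ℕ} {T : Type*} [Fintype T]
    (r : T → ℝ) (hr : ∀ τ, 0 < r τ)
    (m n : T → (Fin k → ℕ))
    (c : Fin k → ℝ) (hc : ∀ i, 0 ≤ c i)
    (hbal : ∀ κ : Fin k → ℕ,
      ∑ τ ∈ univ.filter (fun τ => m τ = κ), r τ * ∏ i, c i ^ (m τ i)
        = ∑ τ ∈ univ.filter (fun τ => n τ = κ), r τ * ∏ i, c i ^ (m τ i)) :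
    ∀ i : Fin k,
      ∑ τ, r τ * ((n τ i : ℝ) - (m τ i : ℝ)) * ∏ j, c j ^ (m τ j) = 0 :=
  complexBalanced_equilibrium_general r m n c hbal
end
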